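/- Let q ∈ (0,1] and let k be a positive integer with ⌈kq⌉ = 2 (such k exists). Consider the market with D = {d₁, d₂}, H = {h₁, h₂}, 𝐗 = {x¹, …, x^k, w}, where x^i_D = d₁ and x^i_H = h₁ for i = 1, …, k, and w_D = d₂, w_H = h₂; hospital preferences ≻_{h₁}: {x^k} ≻ {x^{k−1}} ≻ ⋯ ≻ {x¹} ≻ ∅ (only singletons acceptable) and ≻_{h₂}: {w} ≻ ∅ (these are substitutable and satisfy the law of aggregate demand). Let P₁ be d₁'s preference {x¹} P₁ {x²} P₁ ⋯ P₁ {x^k} P₁ ∅ and P'₁ the preference {x¹} P'₁ ∅ (all other contracts unacceptable). Then for every preference P₂ of d₂, the q-quantile stable rule satisfies φ^q_{d₁}(P₁,P₂) = {x²} and φ^q_{d₁}(P'₁,P₂) = {x¹}; since {x¹} P₁ {x²}, P'₁ is an obvious manipulation of φ^q at P₁, and hence for every q ∈ (0,1] the q-quantile stable rule is obviously manipulable. -/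
import Mathlib


set_option linter.unusedSectionVars false

namespace Matching

open Finset

/-- A many-to-one matching market with contracts: each contract `x` involves exactly one
doctor `xD x` and one hospital `xH x`; each hospital `h` has a fixed antisymmetric,
transitive and complete preference `prH h`, modelled as a linear order on sets of
contracts (only its comparisons between allocations of contracts involving `h` matter). -/
structure Market (D H X : Type*) where
  xD : X → D
  xH : X → H
  prH : H → LinearOrder (Finset X)

/-- A doctor's preference: an antisymmetric, transitive and complete preference, modelled
as a linear order on sets of contracts (only comparisons between `∅` and singletons of
contracts involving the doctor matter). -/
abbrev Pref (X : Type*) := LinearOrder (Finset X)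

/-- A profile of doctors' preferences. -/
abbrev Profile (D X : Type*) := D → Pref X

variable {D H X : Type*}
variable [DecidableEq D] [DecidableEq H] [DecidableEq X] [Fintype D] [Fintype H] [Fintype X]

/-- `Y_d` : the contracts in `Y` involving doctor `d`. -/
def docPart (M : Market D H X) (Y : Finset X) (d : D) : Finset X :=
  Y.filter fun x => M.xD x = d

/-- `Y_h` : the contracts in `Y` involving hospital `h`. -/
def hospPart (M : Market D H X) (Y : Finset X) (h : H) : Finset X :=
  Y.filter fun x => M.xH x = h

/-- An allocation: distinct contracts involve distinct doctors. -/
def IsAllocation (M : Market D H X) (Z : Finset X) : Prop :=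
  ∀ x ∈ Z, ∀ y ∈ Z, M.xD x = M.xD y → x = y

/-- `A(Y)` : the allocations contained in `Y`. -/
def allocs (M : Market D H X) (Y : Finset X) : Finset (Finset X) :=
  Y.powerset.filter fun Z => ∀ x ∈ Z, ∀ y ∈ Z, M.xD x = M.xD y → x = y

lemma empty_mem_allocs (M : Market D H X) (Y : Finset X) : ∅ ∈ allocs M Y := by
  simp [allocs]

/-- The best allocation contained in `Y` according to the linear order `pr`. -/
def bestAlloc (M : Market D H X) (pr : Pref X) (Y : Finset X) : Finset X :=
  @Finset.max' _ pr (allocs M Y) ⟨∅, empty_mem_allocs M Y⟩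

/-- `C_h(Y)` : hospital `h`'s choice set from `Y` (the `≻_h`-maximum of `A(Y_h)`). -/
def Ch (M : Market D H X) (h : H) (Y : Finset X) : Finset X :=
  bestAlloc M (M.prH h) (hospPart M Y h)

/-- `C_d(P_d, Y)` : doctor `d`'s choice set from `Y` (the `P_d`-maximum of `A(Y_d)`). -/
def Cd (M : Market D H X) (Pd : Pref X) (d : D) (Y : Finset X) : Finset X :=
  bestAlloc M Pd (docPart M Y d)

/-- `C_H(Y) = ∪_{h ∈ H} C_h(Y)`. -/
def CH (M : Market D H X) (Y : Finset X) : Finset X :=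
  univ.biUnion fun h => Ch M h Y

/-- `C_D(Y) = ∪_{d ∈ D} C_d(Y)`. -/
def CD (M : Market D H X) (P : Profile D X) (Y : Finset X) : Finset X :=
  univ.biUnion fun d => Cd M (P d) d Y

/-- Substitutability of hospital `h`'s preference: `x ∈ C_h(W)` and `x ∈ Y_h ⊆ W_h`
imply `x ∈ C_h(Y)`. -/
def Substitutable (M : Market D H X) (h : H) : Prop :=
  ∀ W Y : Finset X, hospPart M Y h ⊆ hospPart M W h →
    ∀ x ∈ hospPart M Y h, x ∈ Ch M h W → x ∈ Ch M h Y

/-- The sets `X^t` of still-available contracts in the doctor-proposing deferred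
acceptance algorithm (0-based: index `t` corresponds to iteration `t+1`). -/
def DDAsets (M : Market D H X) (P : Profile D X) : ℕ → Finset X
  | 0 => univ
  | t + 1 =>
      DDAsets M P t \ (CD M P (DDAsets M P t) \ CH M (CD M P (DDAsets M P t)))

/-- `O^t` : the offers made by the doctors at iteration `t` of D-DA (0-based). -/
def offers (M : Market D H X) (P : Profile D X) (t : ℕ) : Finset X :=
  CD M P (DDAsets M P t)

/-- `O_A^t = ∪_{k ≤ t} O^k` : the accumulated offers up to iteration `t` (0-based). -/
def accOffers (M : Market D H X) (P : Profile D X) (t : ℕ) : Finset X :=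
  (Finset.range (t + 1)).biUnion fun k => offers M P k

/-- D-DA has stopped at iteration `t`: all offers are accepted. -/
def DDAstopped (M : Market D H X) (P : Profile D X) (t : ℕ) : Prop :=
  CH M (offers M P t) = offers M P t

/-- The (0-based) last iteration of D-DA, i.e. `T - 1` where `T` is the number of
iterations of D-DA. -/
noncomputable def DDAlast (M : Market D H X) (P : Profile D X) : ℕ :=
  sInf {t | DDAstopped M P t}

/-- The output of D-DA (the algorithm provably stops by iteration `Fintype.card X`,
and once stopped the offer sets stay constant). -/
def DDAoutput (M : Market D H X) (P : Profile D X) : Finset X :=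
  CH M (offers M P (Fintype.card X))

/-- The doctor-optimal rule `φ̄`, giving doctor `d`'s outcome `φ̄_d(P)` (an element of
`A(𝐗_d)`, i.e. `∅` or a singleton). -/
def docOpt (M : Market D H X) (P : Profile D X) (d : D) : Finset X :=
  docPart M (DDAoutput M P) d

/-- The sets `X^t` of still-available contracts in the hospital-proposing deferred
acceptance algorithm (0-based). -/
def HDAsets (M : Market D H X) (P : Profile D X) : ℕ → Finset X
  | 0 => univ
  | t + 1 =>
      HDAsets M P t \ (CH M (HDAsets M P t) \ CD M P (CH M (HDAsets M P t)))

/-- The offers made by the hospitals at iteration `t` of H-DA (0-based). -/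
def hOffers (M : Market D H X) (P : Profile D X) (t : ℕ) : Finset X :=
  CH M (HDAsets M P t)

/-- The output of H-DA. -/
def HDAoutput (M : Market D H X) (P : Profile D X) : Finset X :=
  CD M P (hOffers M P (Fintype.card X))

/-- The hospital-optimal rule `φ̲`, giving doctor `d`'s outcome `φ̲_d(P)`. -/
def hospOpt (M : Market D H X) (P : Profile D X) (d : D) : Finset X :=
  docPart M (HDAoutput M P) d

/-- The option set `O^φ(P_d)` left open by `P_d` at the rule `φ`. -/
def optionSet (rule : Profile D X → D → Finset X) (d : D) (Pd : Pref X) :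
    Set (Finset X) :=
  {S | ∃ P : Profile D X, P d = Pd ∧ S = rule P d}

open scoped Classical in
/-- `W_d(pr, S)` : the `pr`-worst element of the (finite) set `S` of outcomes. -/
noncomputable def worstIn (pr : Pref X) (S : Set (Finset X)) : Finset X :=
  if h : S.Nonempty then
    @Finset.min' _ pr (Set.toFinite S).toFinset ((Set.Finite.toFinset_nonempty _).mpr h)
  else ∅

open scoped Classical in
/-- The `pr`-best element of the (finite) set `S` of outcomes. -/
noncomputable def bestIn (pr : Pref X) (S : Set (Finset X)) : Finset X :=
  if h : S.Nonempty then
    @Finset.max' _ pr (Set.toFinite S).toFinset ((Set.Finite.toFinset_nonempty _).mpr h)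
  else ∅

/-- `P'_d` is a manipulation of the rule at `P_d` : for some subprofile of the other
doctors, reporting `P'_d` gives a strictly `P_d`-better outcome than truth-telling. -/
def IsManip (rule : Profile D X → D → Finset X) (d : D) (Pd P'd : Pref X) : Prop :=
  ∃ P : Profile D X, P d = Pd ∧
    Pd.lt (rule P d) (rule (Function.update P d P'd) d)

/-- `P'_d` is an obvious manipulation of the rule at `P_d`. -/
def IsObviousManip (rule : Profile D X → D → Finset X) (d : D) (Pd P'd : Pref X) :
    Prop :=
  IsManip rule d Pd P'd ∧
    (Pd.lt (worstIn Pd (optionSet rule d Pd)) (worstIn Pd (optionSet rule d P'd)) ∨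
     Pd.lt (bestIn Pd (optionSet rule d Pd)) (bestIn Pd (optionSet rule d P'd)))

/-- A rule is not obviously manipulable (NOM). -/
def NOM (rule : Profile D X → D → Finset X) : Prop :=
  ∀ (d : D) (Pd P'd : Pref X), ¬ IsObviousManip rule d Pd P'd

/-- A rule is obviously manipulable (OM). -/
def OM (rule : Profile D X → D → Finset X) : Prop :=
  ∃ (d : D) (Pd P'd : Pref X), IsObviousManip rule d Pd P'd

/-- `Y` is a stable allocation at the profile `P` : it is an individually rational
allocation and admits no blocking contract. -/
def IsStable (M : Market D H X) (P : Profile D X) (Y : Finset X) : Prop :=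
  IsAllocation M Y ∧ CD M P Y = Y ∧ CH M Y = Y ∧
    ∀ x : X, x ∉ Y →
      ¬ (x ∈ Cd M (P (M.xD x)) (M.xD x) (insert x Y) ∧
         x ∈ Ch M (M.xH x) (insert x Y))

/-- `⌈kq⌉` where `k` is the number of stable allocations at `P`. -/
noncomputable def quantileIndex (M : Market D H X) (P : Profile D X) (q : ℝ) : ℕ :=
  ⌈(Set.ncard {Y : Finset X | IsStable M P Y} : ℝ) * q⌉₊

/-- `Z` is doctor `d`'s `⌈kq⌉`-th best outcome (according to `P d`) among the `k` stable
allocations at `P` : it is the outcome of some stable allocation, strictly fewer than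
`⌈kq⌉` stable allocations give `d` a strictly better outcome, and at least `⌈kq⌉` stable
allocations give `d` a weakly better outcome. -/
def IsQuantileOutcome (M : Market D H X) (P : Profile D X) (q : ℝ) (d : D)
    (Z : Finset X) : Prop :=
  (∃ Y : Finset X, IsStable M P Y ∧ docPart M Y d = Z) ∧
    Set.ncard {Y : Finset X | IsStable M P Y ∧ (P d).lt Z (docPart M Y d)} <
      quantileIndex M P q ∧
    quantileIndex M P q ≤
      Set.ncard {Y : Finset X | IsStable M P Y ∧ (P d).le Z (docPart M Y d)}


section Aux

variable {D H X : Type*}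
variable [DecidableEq D] [DecidableEq H] [DecidableEq X] [Fintype D] [Fintype H] [Fintype X]

lemma mem_allocs_iff {M : Market D H X} {Y Z : Finset X} :
    Z ∈ allocs M Y ↔ Z ⊆ Y ∧ ∀ x ∈ Z, ∀ y ∈ Z, M.xD x = M.xD y → x = y := by
  simp [allocs]

lemma bestAlloc_mem (M : Market D H X) (pr : Pref X) (Y : Finset X) :
    bestAlloc M pr Y ∈ allocs M Y :=
  @Finset.max'_mem _ pr _ _

lemma bestAlloc_eq {M : Market D H X} (pr : Pref X) {Y a : Finset X}
    (ha : a ∈ allocs M Y) (hmax : ∀ b ∈ allocs M Y, pr.le b a) :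
    bestAlloc M pr Y = a := by
  exact pr.le_antisymm _ _ (hmax _ (bestAlloc_mem M pr Y)) (@Finset.le_max' _ pr _ _ ha)

lemma allocs_empty' (M : Market D H X) : allocs M (∅ : Finset X) = {∅} := by
  ext Z
  simp only [mem_allocs_iff, Finset.subset_empty, Finset.mem_singleton]
  constructor
  · rintro ⟨rfl, -⟩; rfl
  · rintro rfl; simp

lemma allocs_singleton (M : Market D H X) (a : X) :
    allocs M ({a} : Finset X) = {∅, {a}} := by
  ext Z
  simp only [mem_allocs_iff, Finset.subset_singleton_iff, Finset.mem_insert,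
    Finset.mem_singleton]
  constructor
  · rintro ⟨h, -⟩; exact h
  · rintro (rfl | rfl) <;> simp

lemma allocs_pair (M : Market D H X) {a b : X} (hab : a ≠ b) (hD : M.xD a = M.xD b) :
    allocs M ({a, b} : Finset X) = {∅, {a}, {b}} := by
  ext Z
  simp only [mem_allocs_iff, Finset.mem_insert, Finset.mem_singleton]
  constructor
  · rintro ⟨hsub, hall⟩
    by_cases ha : a ∈ Z <;> by_cases hb : b ∈ Z
    · exact absurd (hall a ha b hb hD) hab
    · right; left
      apply Finset.Subset.antisymm
      · intro x hx
        rcases Finset.mem_insert.1 (hsub hx) with h | h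
        · simpa [h]
        · exact absurd (Finset.mem_singleton.1 h ▸ hx) hb
      · simpa using ha
    · right; right
      apply Finset.Subset.antisymm
      · intro x hx
        rcases Finset.mem_insert.1 (hsub hx) with h | h
        · exact absurd (h ▸ hx) ha
        · simpa [Finset.mem_singleton.1 h]
      · simpa using hb
    · left
      ext x
      simp only [Finset.notMem_empty, iff_false]
      intro hx
      rcases Finset.mem_insert.1 (hsub hx) with h | h
      · exact ha (h ▸ hx)
      · exact hb (Finset.mem_singleton.1 h ▸ hx)
  · rintro (rfl | rfl | rfl)
    · simp
    · refine ⟨by simp, by simp⟩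
    · refine ⟨by simp, by simp⟩

lemma bestAlloc_empty (M : Market D H X) (pr : Pref X) :
    bestAlloc M pr (∅ : Finset X) = ∅ := by
  apply bestAlloc_eq pr
  · rw [allocs_empty']; simp
  · intro b hb
    rw [allocs_empty'] at hb
    simp only [Finset.mem_singleton] at hb
    subst hb; exact pr.le_refl _

lemma bestAlloc_single_pos (M : Market D H X) (pr : Pref X) {a : X}
    (h : pr.lt ∅ {a}) : bestAlloc M pr ({a} : Finset X) = {a} := by
  apply bestAlloc_eq pr
  · rw [allocs_singleton]; simp
  · intro b hb
    rw [allocs_singleton] at hb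
    simp only [Finset.mem_insert, Finset.mem_singleton] at hb
    rcases hb with rfl | rfl
    · exact @le_of_lt _ pr.toPartialOrder.toPreorder _ _ h
    · exact pr.le_refl _

lemma bestAlloc_single_neg (M : Market D H X) (pr : Pref X) {a : X}
    (h : pr.lt {a} ∅) : bestAlloc M pr ({a} : Finset X) = ∅ := by
  apply bestAlloc_eq pr
  · rw [allocs_singleton]; simp
  · intro b hb
    rw [allocs_singleton] at hb
    simp only [Finset.mem_insert, Finset.mem_singleton] at hb
    rcases hb with rfl | rfl
    · exact pr.le_refl _
    · exact @le_of_lt _ pr.toPartialOrder.toPreorder _ _ h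

lemma bestAlloc_pair (M : Market D H X) (pr : Pref X) {a b : X} (hab : a ≠ b)
    (hD : M.xD a = M.xD b) (h1 : pr.lt ∅ {a}) (h2 : pr.lt {b} {a}) :
    bestAlloc M pr ({a, b} : Finset X) = {a} := by
  apply bestAlloc_eq pr
  · rw [allocs_pair M hab hD]; simp
  · intro c hc
    rw [allocs_pair M hab hD] at hc
    simp only [Finset.mem_insert, Finset.mem_singleton] at hc
    rcases hc with rfl | rfl | rfl
    · exact @le_of_lt _ pr.toPartialOrder.toPreorder _ _ h1
    · exact pr.le_refl _
    · exact @le_of_lt _ pr.toPartialOrder.toPreorder _ _ h2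

end Aux

section Market2

variable {k : ℕ} [NeZero k] {M : Market (Fin 2) (Fin 2) (Option (Fin k))}

lemma docPart0 (hxDs : ∀ i : Fin k, M.xD (some i) = 0) (hxDw : M.xD none = 1)
    (Y : Finset (Option (Fin k))) : docPart M Y 0 = Y.erase none := by
  ext x
  cases x with
  | none => simp [docPart, hxDw]
  | some i => simp [docPart, hxDs]

lemma docPart1 (hxDs : ∀ i : Fin k, M.xD (some i) = 0) (hxDw : M.xD none = 1)
    (Y : Finset (Option (Fin k))) :
    docPart M Y 1 = if none ∈ Y then {none} else ∅ := by
  ext x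
  cases x with
  | none => by_cases h : none ∈ Y <;> simp [docPart, hxDw, h]
  | some i => by_cases h : none ∈ Y <;> simp [docPart, hxDs, h]

lemma hospPart0 (hxHs : ∀ i : Fin k, M.xH (some i) = 0) (hxHw : M.xH none = 1)
    (Y : Finset (Option (Fin k))) : hospPart M Y 0 = Y.erase none := by
  ext x
  cases x with
  | none => simp [hospPart, hxHw]
  | some i => simp [hospPart, hxHs]

lemma hospPart1 (hxHs : ∀ i : Fin k, M.xH (some i) = 0) (hxHw : M.xH none = 1)
    (Y : Finset (Option (Fin k))) :
    hospPart M Y 1 = if none ∈ Y then {none} else ∅ := by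
  ext x
  cases x with
  | none => by_cases h : none ∈ Y <;> simp [hospPart, hxHw, h]
  | some i => by_cases h : none ∈ Y <;> simp [hospPart, hxHs, h]

lemma CD_two (P : Profile (Fin 2) (Option (Fin k))) (Y : Finset (Option (Fin k))) :
    CD M P Y = Cd M (P 0) 0 Y ∪ Cd M (P 1) 1 Y := by
  rw [CD, show (Finset.univ : Finset (Fin 2)) = {0, 1} by decide,
    Finset.biUnion_insert, Finset.singleton_biUnion]

lemma CH_two (Y : Finset (Option (Fin k))) :
    CH M Y = Ch M 0 Y ∪ Ch M 1 Y := by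
  rw [CH, show (Finset.univ : Finset (Fin 2)) = {0, 1} by decide,
    Finset.biUnion_insert, Finset.singleton_biUnion]

open Classical in
/-- The `d₂`-part of any stable allocation. -/
noncomputable def Wset (P : Profile (Fin 2) (Option (Fin k))) :
    Finset (Option (Fin k)) :=
  if (P 1).lt ∅ {none} then {none} else ∅

lemma some_notMem_Wset (P : Profile (Fin 2) (Option (Fin k))) (i : Fin k) :
    some i ∉ Wset P := by
  unfold Wset; split <;> simp

lemma none_mem_Wset_iff (P : Profile (Fin 2) (Option (Fin k))) :
    none ∈ Wset P ↔ (P 1).lt ∅ {none} := by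
  by_cases h : (P 1).lt ∅ {none} <;> simp [Wset, h]

lemma Wset_pos {P : Profile (Fin 2) (Option (Fin k))} (h : (P 1).lt ∅ {none}) :
    Wset P = {none} := by simp [Wset, h]

lemma Wset_neg {P : Profile (Fin 2) (Option (Fin k))} (h : ¬ (P 1).lt ∅ {none}) :
    Wset P = ∅ := by simp [Wset, h]

lemma erase_insert_Wset (P : Profile (Fin 2) (Option (Fin k))) (i : Fin k) :
    (insert (some i) (Wset P)).erase none = {some i} := by
  by_cases h : (P 1).lt ∅ {none}
  · rw [Wset_pos h]; ext x; cases x <;> simp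
  · rw [Wset_neg h]; ext x; cases x <;> simp

end Market2

section Stable

variable {k : ℕ} [NeZero k] {M : Market (Fin 2) (Fin 2) (Option (Fin k))}

lemma stable_forward
    (hxDs : ∀ i : Fin k, M.xD (some i) = 0) (hxDw : M.xD none = 1)
    (hxHs : ∀ i : Fin k, M.xH (some i) = 0) (hxHw : M.xH none = 1)
    (hpr1e : ∀ i : Fin k, (M.prH 0).lt (∅ : Finset (Option (Fin k))) {some i})
    (hpr2 : (M.prH 1).lt (∅ : Finset (Option (Fin k))) {none})
    (P : Profile (Fin 2) (Option (Fin k)))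
    (hP00 : (P 0).lt (∅ : Finset (Option (Fin k))) {some 0})
    (Y : Finset (Option (Fin k))) (hY : IsStable M P Y) :
    ∃ i : Fin k, Y = insert (some i) (Wset P) := by
  obtain ⟨halloc, hCD, hCH, hblock⟩ := hY
  -- some doctor-1 contract is matched
  have hex : ∃ i : Fin k, some i ∈ Y := by
    by_contra hno
    push_neg at hno
    have hYer : Y.erase none = ∅ := by
      ext x; cases x <;> simp [hno]
    refine hblock (some 0) (hno 0) ⟨?_, ?_⟩
    · rw [hxDs]
      show some (0 : Fin k) ∈ Cd M (P 0) 0 (insert (some 0) Y)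
      unfold Cd
      rw [docPart0 hxDs hxDw, Finset.erase_insert_of_ne (by simp), hYer]
      rw [show insert (some (0 : Fin k)) (∅ : Finset (Option (Fin k))) = {some 0} from rfl]
      rw [bestAlloc_single_pos M _ hP00]
      simp
    · rw [hxHs]
      show some (0 : Fin k) ∈ Ch M 0 (insert (some 0) Y)
      unfold Ch
      rw [hospPart0 hxHs hxHw, Finset.erase_insert_of_ne (by simp), hYer]
      rw [show insert (some (0 : Fin k)) (∅ : Finset (Option (Fin k))) = {some 0} from rfl]
      rw [bestAlloc_single_pos M _ (hpr1e 0)]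
      simp
  have huniq : ∀ i j : Fin k, some i ∈ Y → some j ∈ Y → i = j := by
    intro i j hi hj
    have := halloc _ hi _ hj (by rw [hxDs, hxDs])
    exact Option.some.inj this
  have hnone : (none ∈ Y) ↔ (P 1).lt ∅ {none} := by
    constructor
    · intro hmem
      by_contra hlt
      have hne : ({none} : Finset (Option (Fin k))) ≠ ∅ := by simp
      have hlt' : (P 1).lt {none} ∅ := by
        rcases @lt_trichotomy _ (P 1) (∅ : Finset (Option (Fin k))) {none} with h | h | h
        · exact absurd h hlt
        · exact absurd h.symm hne
        · exact h
      have hm : none ∈ Cd M (P 0) 0 Y ∪ Cd M (P 1) 1 Y := by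
        rw [← CD_two, hCD]; exact hmem
      rcases Finset.mem_union.1 hm with h | h
      · have hsub : Cd M (P 0) 0 Y ⊆ Y.erase none := by
          rw [← docPart0 hxDs hxDw]
          exact (mem_allocs_iff.1 (bestAlloc_mem M (P 0) _)).1
        exact absurd (hsub h) (by simp)
      · unfold Cd at h
        rw [docPart1 hxDs hxDw, if_pos hmem, bestAlloc_single_neg M _ hlt'] at h
        exact absurd h (by simp)
    · intro hlt
      by_contra hmem
      refine hblock none hmem ⟨?_, ?_⟩
      · rw [hxDw]
        unfold Cd
        rw [docPart1 hxDs hxDw, if_pos (Finset.mem_insert_self _ _),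
          bestAlloc_single_pos M _ hlt]
        simp
      · rw [hxHw]
        unfold Ch
        rw [hospPart1 hxHs hxHw, if_pos (Finset.mem_insert_self _ _),
          bestAlloc_single_pos M _ hpr2]
        simp
  obtain ⟨i, hi⟩ := hex
  refine ⟨i, ?_⟩
  ext x
  cases x with
  | none =>
      simp only [Finset.mem_insert, hnone, none_mem_Wset_iff]
      constructor
      · intro h; right; exact h
      · rintro (h | h)
        · exact absurd h (by simp)
        · exact h
  | some j =>
      simp only [Finset.mem_insert]
      constructor
      · intro h
        left
        rw [huniq j i h hi]
      · rintro (h | h)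
        · rw [Option.some.inj h]; exact hi
        · exact absurd h (some_notMem_Wset P j)

lemma stable_backward
    (hxDs : ∀ i : Fin k, M.xD (some i) = 0) (hxDw : M.xD none = 1)
    (hxHs : ∀ i : Fin k, M.xH (some i) = 0) (hxHw : M.xH none = 1)
    (hpr1 : ∀ i j : Fin k, i < j →
      (M.prH 0).lt ({some i} : Finset (Option (Fin k))) {some j})
    (hpr1e : ∀ i : Fin k, (M.prH 0).lt (∅ : Finset (Option (Fin k))) {some i})
    (hpr2 : (M.prH 1).lt (∅ : Finset (Option (Fin k))) {none})
    (P : Profile (Fin 2) (Option (Fin k))) (i : Fin k)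
    (h0 : (P 0).lt (∅ : Finset (Option (Fin k))) {some i})
    (hcd : ∀ j : Fin k, i < j → (P 0).lt ({some j} : Finset (Option (Fin k))) {some i}) :
    IsStable M P (insert (some i) (Wset P)) := by
  set Y : Finset (Option (Fin k)) := insert (some i) (Wset P) with hYdef
  have hsome_mem : ∀ j : Fin k, some j ∈ Y → j = i := by
    intro j hj
    rcases Finset.mem_insert.1 hj with h | h
    · exact Option.some.inj h
    · exact absurd h (some_notMem_Wset P j)
  have hnoneY : (none ∈ Y) ↔ (P 1).lt ∅ {none} := by
    rw [hYdef]
    simp only [Finset.mem_insert, none_mem_Wset_iff]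
    constructor
    · rintro (h | h)
      · exact absurd h (by simp)
      · exact h
    · intro h; right; exact h
  refine ⟨?_, ?_, ?_, ?_⟩
  · -- allocation
    intro x hx y hy hxy
    cases x with
    | none =>
        cases y with
        | none => rfl
        | some b => rw [hxDw, hxDs] at hxy; exact absurd hxy.symm (by decide)
    | some a =>
        cases y with
        | none => rw [hxDw, hxDs] at hxy; exact absurd hxy (by decide)
        | some b => rw [hsome_mem a hx, hsome_mem b hy]
  · -- CD = Y
    rw [CD_two]
    have h1 : Cd M (P 0) 0 Y = {some i} := by
      unfold Cd
      rw [docPart0 hxDs hxDw, hYdef, erase_insert_Wset, bestAlloc_single_pos M _ h0]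
    by_cases hc : (P 1).lt ∅ {none}
    · have h2 : Cd M (P 1) 1 Y = {none} := by
        unfold Cd
        rw [docPart1 hxDs hxDw, if_pos (hnoneY.2 hc), bestAlloc_single_pos M _ hc]
      rw [h1, h2, hYdef, Wset_pos hc]
      ext x; cases x <;> simp
    · have h2 : Cd M (P 1) 1 Y = ∅ := by
        unfold Cd
        rw [docPart1 hxDs hxDw, if_neg (fun hm => hc (hnoneY.1 hm)), bestAlloc_empty]
      rw [h1, h2, hYdef, Wset_neg hc]
      ext x; cases x <;> simp
  · -- CH = Y
    rw [CH_two]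
    have h1 : Ch M 0 Y = {some i} := by
      unfold Ch
      rw [hospPart0 hxHs hxHw, hYdef, erase_insert_Wset, bestAlloc_single_pos M _ (hpr1e i)]
    by_cases hc : (P 1).lt ∅ {none}
    · have h2 : Ch M 1 Y = {none} := by
        unfold Ch
        rw [hospPart1 hxHs hxHw, if_pos (hnoneY.2 hc), bestAlloc_single_pos M _ hpr2]
      rw [h1, h2, hYdef, Wset_pos hc]
      ext x; cases x <;> simp
    · have h2 : Ch M 1 Y = ∅ := by
        unfold Ch
        rw [hospPart1 hxHs hxHw, if_neg (fun hm => hc (hnoneY.1 hm)), bestAlloc_empty]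
      rw [h1, h2, hYdef, Wset_neg hc]
      ext x; cases x <;> simp
  · -- no blocking
    rintro x hx ⟨hc1, hc2⟩
    cases x with
    | none =>
        have hlt' : (P 1).lt {none} ∅ := by
          rcases @lt_trichotomy _ (P 1) (∅ : Finset (Option (Fin k))) {none} with h | h | h
          · exact absurd (hnoneY.2 h) hx
          · exact absurd h.symm (by simp)
          · exact h
        rw [hxDw] at hc1
        unfold Cd at hc1
        rw [docPart1 hxDs hxDw, if_pos (Finset.mem_insert_self _ _),
          bestAlloc_single_neg M _ hlt'] at hc1
        exact absurd hc1 (by simp)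
    | some j =>
        have hji : j ≠ i := fun h => hx (h ▸ Finset.mem_insert_self _ _)
        have hpart : (insert (some j) Y).erase none = ({some j, some i} : Finset (Option (Fin k))) := by
          rw [Finset.erase_insert_of_ne (by simp), hYdef, erase_insert_Wset]
        have hne : (some j : Option (Fin k)) ≠ some i := by simpa using hji
        rcases lt_or_gt_of_ne hji with h | h
        · -- j < i : hospital prefers some i, so some j rejected by hospital
          rw [hxHs] at hc2
          unfold Ch at hc2
          rw [hospPart0 hxHs hxHw, hpart, Finset.pair_comm,
            bestAlloc_pair M _ hne.symm (by rw [hxDs, hxDs]) (hpr1e i) (hpr1 j i h)] at hc2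
          simp only [Finset.mem_singleton] at hc2
          exact hji (Option.some.inj hc2)
        · -- i < j : doctor prefers some i, so some j rejected by doctor
          rw [hxDs] at hc1
          unfold Cd at hc1
          rw [docPart0 hxDs hxDw, hpart, Finset.pair_comm,
            bestAlloc_pair M _ hne.symm (by rw [hxDs, hxDs]) h0 (hcd j h)] at hc1
          simp only [Finset.mem_singleton] at hc1
          exact hji (Option.some.inj hc1)

end Stable

section Final

variable {k : ℕ} [NeZero k] {M : Market (Fin 2) (Fin 2) (Option (Fin k))}

/-- The stable allocations in the manipulation market. -/
noncomputable def fAlloc (P : Profile (Fin 2) (Option (Fin k))) (i : Fin k) :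
    Finset (Option (Fin k)) :=
  insert (some i) (Wset P)

lemma fAlloc_injective (P : Profile (Fin 2) (Option (Fin k))) :
    Function.Injective (fAlloc P) := by
  intro a b hab
  have : some a ∈ insert (some b) (Wset P) := by
    rw [show insert (some b) (Wset P) = fAlloc P b from rfl, ← hab]
    exact Finset.mem_insert_self _ _
  rcases Finset.mem_insert.1 this with h | h
  · exact Option.some.inj h
  · exact absurd h (some_notMem_Wset P a)

lemma docPart0_fAlloc (hxDs : ∀ i : Fin k, M.xD (some i) = 0) (hxDw : M.xD none = 1)
    (P : Profile (Fin 2) (Option (Fin k))) (i : Fin k) :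
    docPart M (fAlloc P i) 0 = {some i} := by
  unfold fAlloc
  rw [docPart0 hxDs hxDw, erase_insert_Wset]

lemma worstIn_singleton (pr : Pref (Option (Fin k))) (a : Finset (Option (Fin k))) :
    worstIn pr ({a} : Set (Finset (Option (Fin k)))) = a := by
  unfold worstIn
  rw [dif_pos (Set.singleton_nonempty a)]
  simp only [Set.Finite.toFinset_singleton]
  exact @Finset.min'_singleton _ pr a

end Final

/-- Theorem 4 (manipulability part): let `q ∈ (0,1]` and let `k` be a positive integer
with `⌈kq⌉ = 2` (such `k` exists). In the market with doctors `d₁ = 0, d₂ = 1`,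
hospitals `h₁ = 0, h₂ = 1`, contracts `x¹, …, x^k` (encoded as `some 0, …, some (k-1)`,
all with doctor `d₁` and hospital `h₁`) and `w` (encoded as `none`, with doctor `d₂` and
hospital `h₂`), hospital preferences `{x^k} ≻_{h₁} ⋯ ≻_{h₁} {x¹} ≻_{h₁} ∅` and
`{w} ≻_{h₂} ∅`, doctor `d₁`'s preferences `P₁ : {x¹} P₁ ⋯ P₁ {x^k} P₁ ∅` and
`P'₁ : {x¹} P'₁ ∅` (all other contracts unacceptable): any `q`-quantile stable rule `φ`
satisfies, for every preference `P₂` of `d₂`, `φ_{d₁}(P₁,P₂) = {x²}` and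
`φ_{d₁}(P'₁,P₂) = {x¹}`; since `{x¹} P₁ {x²}`, `P'₁` is an obvious manipulation of `φ`
at `P₁`, and hence `φ` is obviously manipulable. -/
theorem quantile_OM (q : ℝ) (hq0 : 0 < q) (hq1 : q ≤ 1)
    (k : ℕ) [NeZero k] (hceil : ⌈(k : ℝ) * q⌉₊ = 2)
    (M : Market (Fin 2) (Fin 2) (Option (Fin k)))
    (hxDs : ∀ i : Fin k, M.xD (some i) = 0) (hxDw : M.xD none = 1)
    (hxHs : ∀ i : Fin k, M.xH (some i) = 0) (hxHw : M.xH none = 1)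
    (hpr1 : ∀ i j : Fin k, i < j →
      (M.prH 0).lt ({some i} : Finset (Option (Fin k))) {some j})
    (hpr1e : ∀ i : Fin k, (M.prH 0).lt (∅ : Finset (Option (Fin k))) {some i})
    (hpr2 : (M.prH 1).lt (∅ : Finset (Option (Fin k))) {none})
    (P1 P'1 : Pref (Option (Fin k)))
    (hP1 : ∀ i j : Fin k, i < j →
      P1.lt ({some j} : Finset (Option (Fin k))) {some i})
    (hP1e : ∀ i : Fin k, P1.lt (∅ : Finset (Option (Fin k))) {some i})
    (hP'1a : P'1.lt (∅ : Finset (Option (Fin k))) {some 0})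
    (hP'1b : ∀ i : Fin k, i ≠ 0 →
      P'1.lt ({some i} : Finset (Option (Fin k))) ∅)
    (phi : Profile (Fin 2) (Option (Fin k)) → Fin 2 → Finset (Option (Fin k)))
    (hphi : ∀ (P : Profile (Fin 2) (Option (Fin k))) (d : Fin 2),
      IsQuantileOutcome M P q d (phi P d)) :
    (∃ k' : ℕ, 0 < k' ∧ ⌈(k' : ℝ) * q⌉₊ = 2) ∧
    (∀ P : Profile (Fin 2) (Option (Fin k)), P 0 = P1 →
        phi P 0 = {some 1} ∧ phi (Function.update P 0 P'1) 0 = {some 0}) ∧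
      IsObviousManip phi 0 P1 P'1 ∧ OM phi := by  -- basic numerology
  have hk2 : 2 ≤ k := by
    have hle : ⌈(k : ℝ) * q⌉₊ ≤ k := by
      rw [Nat.ceil_le]
      calc (k : ℝ) * q ≤ (k : ℝ) * 1 :=
            mul_le_mul_of_nonneg_left hq1 (by positivity)
        _ = k := mul_one _
    omega
  have hval1 : ((1 : Fin k) : ℕ) = 1 := by
    rw [Fin.val_one']
    exact Nat.mod_eq_of_lt hk2
  have h01 : (0 : Fin k) < 1 := by
    rw [Fin.lt_def, hval1, Fin.val_zero]
    omega
  -- P1-comparisons between singletons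
  have hlt_iff : ∀ i j : Fin k,
      (P1.lt ({some i} : Finset (Option (Fin k))) {some j} ↔ j < i) := by
    intro i j
    constructor
    · intro h
      rcases lt_trichotomy j i with h' | h' | h'
      · exact h'
      · subst h'
        exact absurd h (@lt_irrefl _ P1.toPartialOrder.toPreorder _)
      · exact absurd (hP1 i j h') (@lt_asymm _ P1.toPartialOrder.toPreorder _ _ h)
    · exact hP1 j i
  have hle_iff : ∀ i j : Fin k,
      (P1.le ({some i} : Finset (Option (Fin k))) {some j} ↔ j ≤ i) := by
    intro i j
    rw [@le_iff_lt_or_eq _ P1.toPartialOrder, hlt_iff]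
    constructor
    · rintro (h | h)
      · exact le_of_lt h
      · have : i = j := by
          have := Finset.singleton_injective h
          exact Option.some.inj this
        exact this ▸ le_refl _
    · intro h
      rcases lt_or_eq_of_le h with h' | h'
      · exact Or.inl h'
      · exact Or.inr (by rw [h'])
  -- outcome under the true preference P1
  have key1 : ∀ P : Profile (Fin 2) (Option (Fin k)), P 0 = P1 →
      phi P 0 = {some 1} := by
    intro P hP0
    have hchar : ∀ Y, IsStable M P Y ↔ ∃ i : Fin k, Y = fAlloc P i := by
      intro Y
      constructor
      · exact stable_forward hxDs hxDw hxHs hxHw hpr1e hpr2 P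
          (by rw [hP0]; exact hP1e 0) Y
      · rintro ⟨i, rfl⟩
        exact stable_backward hxDs hxDw hxHs hxHw hpr1 hpr1e hpr2 P i
          (by rw [hP0]; exact hP1e i) (fun j hj => by rw [hP0]; exact hP1 i j hj)
    have hset : {Y : Finset (Option (Fin k)) | IsStable M P Y} =
        fAlloc P '' Set.univ := by
      ext Y
      simp only [Set.mem_setOf_eq, Set.mem_image, Set.mem_univ, true_and]
      rw [hchar]
      exact ⟨fun ⟨i, h⟩ => ⟨i, h.symm⟩, fun ⟨i, h⟩ => ⟨i, h.symm⟩⟩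
    have hqi : quantileIndex M P q = 2 := by
      unfold quantileIndex
      rw [hset, Set.ncard_image_of_injective _ (fAlloc_injective P),
        Set.ncard_univ, Nat.card_eq_fintype_card, Fintype.card_fin]
      exact hceil
    obtain ⟨⟨Y, hYs, hYd⟩, hcnt1, hcnt2⟩ := hphi P 0
    obtain ⟨i₀, rfl⟩ := (hchar Y).1 hYs
    have hZ : phi P 0 = {some i₀} := by
      rw [← hYd, docPart0_fAlloc hxDs hxDw]
    rw [hZ, hqi, hP0] at hcnt1 hcnt2
    have hset1 : {Y : Finset (Option (Fin k)) |
        IsStable M P Y ∧ P1.lt {some i₀} (docPart M Y 0)} =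
        fAlloc P '' {j : Fin k | j < i₀} := by
      ext Y
      simp only [Set.mem_setOf_eq, Set.mem_image]
      constructor
      · rintro ⟨hs, hl⟩
        obtain ⟨j, rfl⟩ := (hchar Y).1 hs
        rw [docPart0_fAlloc hxDs hxDw] at hl
        exact ⟨j, (hlt_iff i₀ j).1 hl, rfl⟩
      · rintro ⟨j, hj, rfl⟩
        refine ⟨(hchar _).2 ⟨j, rfl⟩, ?_⟩
        rw [docPart0_fAlloc hxDs hxDw]
        exact (hlt_iff i₀ j).2 hj
    have hset2 : {Y : Finset (Option (Fin k)) |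
        IsStable M P Y ∧ P1.le {some i₀} (docPart M Y 0)} =
        fAlloc P '' {j : Fin k | j ≤ i₀} := by
      ext Y
      simp only [Set.mem_setOf_eq, Set.mem_image]
      constructor
      · rintro ⟨hs, hl⟩
        obtain ⟨j, rfl⟩ := (hchar Y).1 hs
        rw [docPart0_fAlloc hxDs hxDw] at hl
        exact ⟨j, (hle_iff i₀ j).1 hl, rfl⟩
      · rintro ⟨j, hj, rfl⟩
        refine ⟨(hchar _).2 ⟨j, rfl⟩, ?_⟩
        rw [docPart0_fAlloc hxDs hxDw]
        exact (hle_iff i₀ j).2 hj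
    rw [hset1, Set.ncard_image_of_injective _ (fAlloc_injective P),
      show {j : Fin k | j < i₀} = ↑(Finset.Iio i₀) by ext j; simp,
      Set.ncard_coe_finset, Fin.card_Iio] at hcnt1
    rw [hset2, Set.ncard_image_of_injective _ (fAlloc_injective P),
      show {j : Fin k | j ≤ i₀} = ↑(Finset.Iic i₀) by ext j; simp,
      Set.ncard_coe_finset, Fin.card_Iic] at hcnt2
    have hi₀ : i₀ = 1 := by
      apply Fin.ext
      rw [hval1]
      omega
    rw [hZ, hi₀]
  -- outcome under the misreport P'1
  have key2 : ∀ P : Profile (Fin 2) (Option (Fin k)), P 0 = P'1 →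
      phi P 0 = {some 0} := by
    intro P hP0
    obtain ⟨⟨Y, hYs, hYd⟩, -, -⟩ := hphi P 0
    obtain ⟨i, rfl⟩ := stable_forward hxDs hxDw hxHs hxHw hpr1e hpr2 P
      (by rw [hP0]; exact hP'1a) Y hYs
    have hi0 : i = 0 := by
      by_contra hne
      have hCD := hYs.2.1
      have hmem : some i ∈ CD M P (insert (some i) (Wset P)) := by
        rw [hCD]; exact Finset.mem_insert_self _ _
      rw [CD_two] at hmem
      rcases Finset.mem_union.1 hmem with h | h
      · unfold Cd at h
        rw [docPart0 hxDs hxDw, erase_insert_Wset, hP0,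
          bestAlloc_single_neg M _ (hP'1b i hne)] at h
        exact absurd h (by simp)
      · have hsub := (mem_allocs_iff.1 (bestAlloc_mem M (P 1)
          (docPart M (insert (some i) (Wset P)) 1))).1
        have hmem2 := hsub h
        rw [docPart1 hxDs hxDw] at hmem2
        split_ifs at hmem2 <;> simp at hmem2
    have : docPart M (insert (some i) (Wset P)) 0 = {some 0} := by
      rw [docPart0 hxDs hxDw, erase_insert_Wset, hi0]
    rw [← hYd, this]
  -- assemble
  have hlt10 : P1.lt ({some 1} : Finset (Option (Fin k))) {some 0} := hP1 0 1 h01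
  have hupd : ∀ P : Profile (Fin 2) (Option (Fin k)),
      (Function.update P 0 P'1) 0 = P'1 := fun P => by simp
  have hOS1 : optionSet phi 0 P1 = {({some 1} : Finset (Option (Fin k)))} := by
    ext S
    simp only [optionSet, Set.mem_setOf_eq, Set.mem_singleton_iff]
    constructor
    · rintro ⟨P, hP0, rfl⟩; exact key1 P hP0
    · rintro rfl; exact ⟨fun _ => P1, rfl, (key1 _ rfl).symm⟩
  have hOS2 : optionSet phi 0 P'1 = {({some 0} : Finset (Option (Fin k)))} := by
    ext S
    simp only [optionSet, Set.mem_setOf_eq, Set.mem_singleton_iff]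
    constructor
    · rintro ⟨P, hP0, rfl⟩; exact key2 P hP0
    · rintro rfl
      exact ⟨Function.update (fun _ => P1) 0 P'1, hupd _, (key2 _ (hupd _)).symm⟩
  have hobv : IsObviousManip phi 0 P1 P'1 := by
    constructor
    · refine ⟨fun _ => P1, rfl, ?_⟩
      rw [key1 _ rfl, key2 _ (hupd _)]
      exact hlt10
    · left
      rw [hOS1, hOS2, worstIn_singleton, worstIn_singleton]
      exact hlt10
  exact ⟨⟨k, Nat.pos_of_ne_zero (NeZero.ne k), hceil⟩,
    fun P hP0 => ⟨key1 P hP0, key2 _ (hupd _)⟩, hobv, ⟨0, P1, P'1, hobv⟩⟩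

end Matching
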